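/- arXiv:1612.08267 — 10 statements merged into one kernel-verified Lean document; each statement's English description precedes it below -/
import Mathlib

section
/- If x, y, z, w are real numbers satisfying x² + y² + z² − xyz + 8(x + y + z) + 28 = 0 and w = xy − z − 8, then x² + y² + w² − xyw + 8(x + y + w) + 28 = 0. -/
theorem stmt1 (x y z w : ℝ)
    (h : x^2 + y^2 + z^2 - x*y*z + 8*(x + y + z) + 28 = 0)
    (hw : w = x*y - z - 8) :
    x^2 + y^2 + w^2 - x*y*w + 8*(x + y + w) + 28 = 0 := by
  subst hw; nlinarith [h]
end

section
/- If x, y, z are real numbers with x > 2, y > 2, z ≤ 0, then x² + y² + z² − xyz + 8(x + y + z) + 28 > 0. -/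
theorem stmt3 (x y z : ℝ) (hx : x > 2) (hy : y > 2) (hz : z ≤ 0) :
    x^2 + y^2 + z^2 - x*y*z + 8*(x + y + z) + 28 > 0 := by
  have hx4 : 36 < (x + 4) ^ 2 := by nlinarith
  have hy4 : 36 < (y + 4) ^ 2 := by nlinarith
  have hxyz : 0 ≤ x * y * (-z) := mul_nonneg (by positivity) (neg_nonneg.mpr hz)
  calc x^2 + y^2 + z^2 - x*y*z + 8*(x + y + z) + 28
      = (x + 4) ^ 2 + (y + 4) ^ 2 + (z + 4) ^ 2 + x * y * (-z) - 20 := by ring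
    _ > 0 := by linarith [sq_nonneg (z + 4)]
end

section
/- For any real numbers x, y, z with x > 2, y > 2, z > 2 satisfying x² + y² + z² − xyz + 8(x + y + z) + 28 = 0, one has xy ≥ 8 + 2√((x+4)² + (y+4)² − 4). -/
theorem stmt4 (x y z : ℝ) (hx : x > 2) (hy : y > 2) (hz : z > 2)
    (h : x^2 + y^2 + z^2 - x*y*z + 8*(x + y + z) + 28 = 0) :
    x*y ≥ 8 + 2 * Real.sqrt ((x+4)^2 + (y+4)^2 - 4) := by
  set C := (x+4)^2 + (y+4)^2 - 4 with hCdef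
  have hC : C ≥ 0 := by nlinarith
  have hC68 : C ≥ 68 := by nlinarith
  set s := Real.sqrt C with hsdef
  have hs0 : s ≥ 0 := Real.sqrt_nonneg C
  have hs2 : s^2 = C := Real.sq_sqrt hC
  have key : (x*y - 8)^2 ≥ 4*C := by nlinarith [sq_nonneg (2*z - (x*y - 8))]
  have hs8 : s ≥ 8 := by nlinarith [sq_nonneg (s - 8)]
  have hxy : x*y > 4 := by nlinarith
  nlinarith [key, hs8, hxy, hs2, mul_self_nonneg (x*y - 8 - 2*s)]
end

section
/- Suppose x, y, z > 2 are real numbers satisfying x² + y² + z² − xyz = 0, z > x and z > y. Then xz − y − z > 0 and yz − x − z > 0, i.e. the two Vieta neighbors w₁ = xz − y and w₂ = yz − x both exceed z. -/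
theorem stmt5 (x y z : ℝ) (hx : x > 2) (hy : y > 2) (hz : z > 2)
    (h : x^2 + y^2 + z^2 - x*y*z = 0) (hzx : z > x) (hzy : z > y) :
    x*z - y - z > 0 ∧ y*z - x - z > 0 := by
  constructor <;> nlinarith [mul_pos (show (0:ℝ) < z - 2 by linarith) (show (0:ℝ) < x - 2 by linarith), mul_pos (show (0:ℝ) < z - 2 by linarith) (show (0:ℝ) < y - 2 by linarith)]
end

section
/- Suppose x, y, z > 2 are real numbers satisfying x² + y² + z² − xyz + 8(x + y + z) + 28 = 0, z > x and z > y. Then xz − y − 8 > z and yz − x − 8 > z. -/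
theorem stmt6 (x y z : ℝ) (hx : x > 2) (hy : y > 2) (hz : z > 2)
    (h : x^2 + y^2 + z^2 - x*y*z + 8*(x + y + z) + 28 = 0)
    (hzx : z > x) (hzy : z > y) :
    x*z - y - 8 > z ∧ y*z - x - 8 > z := by
  have hy0 : (0:ℝ) < y := by linarith
  have hx0 : (0:ℝ) < x := by linarith
  have hz0 : (0:ℝ) < z := by linarith
  constructor
  · -- y*(x*z - y - 8 - z) = x^2+z^2+8x+8z+28 - y*z > z^2 - y*z > 0
    have key : y * (x*z - y - 8 - z) > 0 := by
      nlinarith [mul_pos hz0 (show 0 < z - y by linarith), sq_nonneg x, mul_pos hx0 hz0]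
    nlinarith [key]
  · have key : x * (y*z - x - 8 - z) > 0 := by
      nlinarith [mul_pos hz0 (show 0 < z - x by linarith), sq_nonneg y, mul_pos hx0 hz0]
    nlinarith [key]
end

section
/- Suppose x, y, z > 2 are real numbers satisfying x² + y² + z² − xyz + 8(x + y + z) + 28 = 0 and x, y > z. Then w = xy − z − 8 satisfies w > x and w > y. -/
theorem stmt10 (x y z : ℝ) (hx : x > 2) (hy : y > 2) (hz : z > 2)
    (h : x^2 + y^2 + z^2 - x*y*z + 8*(x + y + z) + 28 = 0)
    (hxz : x > z) (hyz : y > z) :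
    x*y - z - 8 > x ∧ x*y - z - 8 > y := by
  have hz0 : (0:ℝ) < z := by linarith
  constructor
  · nlinarith [sq_nonneg (x - y), mul_pos hz0 hz0, mul_lt_mul_of_pos_left hyz (by linarith : (0:ℝ) < x), sq_nonneg (x + y)]
  · nlinarith [sq_nonneg (x - y), mul_pos hz0 hz0, mul_lt_mul_of_pos_left hxz (by linarith : (0:ℝ) < y), sq_nonneg (x + y)]
end

section
/- For α, β > 0, the matrices φ = [[α, −α], [−β²/α, (1+β²)/α]] and ψ = [[β, α²/β], [β, (1+α²)/β]] lie in SL(2,ℝ) and satisfy tr(φ⁻¹ψ⁻¹φψ) = −2. -/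
/-!
With `s = 1 + α² + β²`, the traces of `φ`, `ψ` and `φψ` are `x = s/α`, `y = s/β` and
`z = s/(αβ)`, which satisfy the Markov equation `x² + y² + z² = xyz`. The Fricke identity
`tr (A⁻¹B⁻¹AB) = x² + y² + z² - xyz - 2` on `SL(2)` then gives trace `-2`.
-/

namespace Matrix

variable {R : Type*} [CommRing R]

theorem trace_commutator_fin_two {A B : Matrix (Fin 2) (Fin 2) R} (hA : A.det = 1)
    (hB : B.det = 1) :
    trace (A⁻¹ * B⁻¹ * A * B) =
      trace A ^ 2 + trace B ^ 2 + trace (A * B) ^ 2 - trace A * trace B * trace (A * B) - 2 := by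
  rw [inv_def, inv_def, hA, hB, Ring.inverse_one, one_smul, one_smul]
  rw [eta_fin_two A, eta_fin_two B] at *
  simp only [adjugate_fin_two_of, mul_fin_two, trace_fin_two_of, det_fin_two_of] at *
  -- the identity holds without `det = 1` once `tr A ^ 2`, `tr B ^ 2` and `2` are weighted by
  -- `det B`, `det A` and `det A * det B`; the coefficients undo these weights
  linear_combination ((B 0 0 + B 1 1) ^ 2 - 2 * (B 0 0 * B 1 1 - B 0 1 * B 1 0)) * hA +
    ((A 0 0 + A 1 1) ^ 2 - 2) * hB

theorem trace_commutator_fin_two_eq_neg_two_of_markov {A B : Matrix (Fin 2) (Fin 2) R}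
    (hA : A.det = 1) (hB : B.det = 1)
    (markov : trace A ^ 2 + trace B ^ 2 + trace (A * B) ^ 2 = trace A * trace B * trace (A * B)) :
    trace (A⁻¹ * B⁻¹ * A * B) = -2 := by
  rw [trace_commutator_fin_two hA hB]
  linear_combination markov

end Matrix

theorem stmt11 (α β : ℝ) (hα : α > 0) (hβ : β > 0) :
    let φ : Matrix (Fin 2) (Fin 2) ℝ := !![α, -α; -β^2/α, (1+β^2)/α]
    let ψ : Matrix (Fin 2) (Fin 2) ℝ := !![β, α^2/β; β, (1+α^2)/β]
    φ.det = 1 ∧ ψ.det = 1 ∧ Matrix.trace (φ⁻¹ * ψ⁻¹ * φ * ψ) = -2 := by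
  intro φ ψ
  have hα₀ := hα.ne'
  have hβ₀ := hβ.ne'
  have hφ : φ.det = 1 := by
    simp only [φ, Matrix.det_fin_two_of]
    field_simp
    ring
  have hψ : ψ.det = 1 := by
    simp only [ψ, Matrix.det_fin_two_of]
    field_simp
    ring
  set s := 1 + α ^ 2 + β ^ 2
  have trφ : Matrix.trace φ = s / α := by
    simp only [φ, Matrix.trace_fin_two_of]
    field_simp
    ring
  have trψ : Matrix.trace ψ = s / β := by
    simp only [ψ, Matrix.trace_fin_two_of]
    field_simp
    ring
  have trφψ : Matrix.trace (φ * ψ) = s / (α * β) := by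
    simp only [φ, ψ, Matrix.mul_fin_two, Matrix.trace_fin_two_of]
    field_simp
    ring
  refine ⟨hφ, hψ, Matrix.trace_commutator_fin_two_eq_neg_two_of_markov hφ hψ ?_⟩
  rw [trφ, trψ, trφψ]
  field_simp
  ring
end

section
/- For α, β > 0, let x = (α+1)²(β+1)/(αβ) − 2, y = (α+1)²(β+1)/α − 2, z = (α+1)²(β+1)²/β − 2 (so −x, −y, −z are the traces appearing in the four-punctured sphere parametrization). Then x² + y² + z² − xyz + 8(x + y + z) + 28 = 0. -/
theorem stmt14 (α β : ℝ) (hα : α > 0) (hβ : β > 0) :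
    let x := (α+1)^2*(β+1)/(α*β) - 2
    let y := (α+1)^2*(β+1)/α - 2
    let z := (α+1)^2*(β+1)^2/β - 2
    x^2 + y^2 + z^2 - x*y*z + 8*(x + y + z) + 28 = 0 := by
  intro x y z
  have ha := hα.ne'
  have hb := hβ.ne'
  simp only [x, y, z]
  field_simp
  ring
end

section
/- Define S, T : ℝ₊² → ℝ₊² by S(α, β) = (1/α, 1/β) and T(α, β) = ((αβ+α+1)/β, αβ+α). Then S² = id and (S∘T)³ = id. -/
noncomputable def S₀₄ : ℝ × ℝ → ℝ × ℝ := fun p => (1/p.1, 1/p.2)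

noncomputable def T₀₄ : ℝ × ℝ → ℝ × ℝ := fun p => ((p.1*p.2+p.1+1)/p.2, p.1*p.2+p.1)

/-! Writing `R = S₀₄ ∘ T₀₄`, one computes `R (α, β) = (β / (αβ + α + 1), 1 / (α (β + 1)))` and
`R² (α, β) = (1 / (αβ + α + β), α (β + 1) / β)`; one more application of the formula for `R`
returns `(α, β)`. Positivity keeps every denominator along the way nonzero. -/

theorem S₀₄_involutive : Function.Involutive S₀₄ := fun p => by
  simp only [S₀₄, one_div_one_div]

theorem S₀₄_comp_T₀₄_apply (α β : ℝ) :
    (S₀₄ ∘ T₀₄) (α, β) = (β / (α * β + α + 1), 1 / (α * (β + 1))) := by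
  simp only [Function.comp_apply, S₀₄, T₀₄, one_div_div, mul_add, mul_one]

theorem S₀₄_comp_T₀₄_apply_apply {α β : ℝ} (hα : 0 < α) (hβ : 0 < β) :
    (S₀₄ ∘ T₀₄) ((S₀₄ ∘ T₀₄) (α, β)) = (1 / (α * β + α + β), α * (β + 1) / β) := by
  rw [S₀₄_comp_T₀₄_apply, S₀₄_comp_T₀₄_apply]
  have : 0 < α * β + α + 1 := by positivity
  ext <;> field_simp <;> ring

theorem S₀₄_comp_T₀₄_cube {α β : ℝ} (hα : 0 < α) (hβ : 0 < β) :
    (S₀₄ ∘ T₀₄) ((S₀₄ ∘ T₀₄) ((S₀₄ ∘ T₀₄) (α, β))) = (α, β) := by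
  rw [S₀₄_comp_T₀₄_apply_apply hα hβ, S₀₄_comp_T₀₄_apply]
  have : 0 < α * β + α + β := by positivity
  ext <;> field_simp; ring

theorem stmt16 (α β : ℝ) (hα : α > 0) (hβ : β > 0) :
    S₀₄ (S₀₄ (α, β)) = (α, β) ∧
    (S₀₄ ∘ T₀₄) ((S₀₄ ∘ T₀₄) ((S₀₄ ∘ T₀₄) (α, β))) = (α, β) :=
  ⟨S₀₄_involutive _, S₀₄_comp_T₀₄_cube hα hβ⟩
end

section
/- Under the coordinate change (α, β) ↦ (A, B) = (−log(αβ), √3 · log(α/β)) on ℝ₊², the map ST(α, β) (where S(α,β) = (β/(α²+β²), α/(α²+β²)) and T(α,β) = (α/(1+β²), αβ/(1+β²))) becomes the linear map (A, B) ↦ (−A/2 + (√3/2)B, −(√3/2)A − B/2), a rotation by −2π/3 about the origin. -/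
noncomputable def Ssys : ℝ × ℝ → ℝ × ℝ := fun p => (p.2/(p.1^2+p.2^2), p.1/(p.1^2+p.2^2))

noncomputable def Tsys : ℝ × ℝ → ℝ × ℝ := fun p => (p.1/(1+p.2^2), p.1*p.2/(1+p.2^2))

/-!
In multiplicative form `ST(α, β) = (β/α, 1/α)`. With `a = log α`, `b = log β` this is the linear
map `(a, b) ↦ (b - a, -a)` of order 3, and the coordinates `A = -(a + b)`, `B = √3 (a - b)`
conjugate it to the rotation by `-2π/3`.
-/

lemma Ssys_Tsys {α : ℝ} (β : ℝ) (hα : α ≠ 0) : Ssys (Tsys (α, β)) = (β / α, 1 / α) := by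
  have hβ2 : (1 : ℝ) + β ^ 2 ≠ 0 := by positivity
  have hnorm : (α / (1 + β ^ 2)) ^ 2 + (α * β / (1 + β ^ 2)) ^ 2 = α ^ 2 / (1 + β ^ 2) := by
    field_simp
  simp only [Ssys, Tsys, hnorm, Prod.mk.injEq]
  constructor <;> field_simp

theorem stmt17 (α β : ℝ) (hα : α > 0) (hβ : β > 0) :
    let A := -Real.log (α*β)
    let B := Real.sqrt 3 * Real.log (α/β)
    let p := Ssys (Tsys (α, β))
    (-Real.log (p.1*p.2), Real.sqrt 3 * Real.log (p.1/p.2)) =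
      (-A/2 + (Real.sqrt 3/2)*B, -(Real.sqrt 3/2)*A - B/2) := by
  intro A B p
  have hp : p = (β / α, 1 / α) := Ssys_Tsys β hα.ne'
  have hprod : β / α * (1 / α) = β / α ^ 2 := by field_simp
  have hquot : β / α / (1 / α) = β := by field_simp
  have hsqrt : Real.sqrt 3 * Real.sqrt 3 = 3 := Real.mul_self_sqrt (by norm_num)
  simp only [hp, A, B, hprod, hquot]
  rw [Real.log_div hβ.ne' (by positivity), Real.log_pow, Real.log_mul hα.ne' hβ.ne',
    Real.log_div hα.ne' hβ.ne', Prod.mk.injEq]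
  constructor
  · linear_combination (Real.log β - Real.log α) / 2 * hsqrt
  · ring
end
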